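/- arXiv:2602.05503 — 3 statements merged into one kernel-verified Lean document; each statement's English description precedes it below -/
import Mathlib

section
/- Let A1 and A2 be RGPC automata with disjoint state sets, each with a unique accepting state distinct from the initial state, where the initial state has only outgoing transitions and the accepting state only incoming transitions. The concatenation automaton A (obtained by adding merged transitions (q, φ∧ψ, q') for each transition (q, φ, a1) into the accepting state of A1 and each transition (i2, ψ, q') out of the initial state of A2) accepts a word w if and only if w can be written as u · L · v (where L is a single label set) such that u·L is accepted by A1 and L·v is accepted by A2. -/
/-- Propositional formulas over a set of labels (label expressions). -/
inductive LForm (L : Type) where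
  | lab : L → LForm L
  | top : LForm L
  | and : LForm L → LForm L → LForm L
  | or : LForm L → LForm L → LForm L
  | not : LForm L → LForm L

/-- Satisfaction of a label expression by a set of labels: labels in the set are
interpreted as true, all others as false. -/
def LForm.Sat {L : Type} [DecidableEq L] (X : Finset L) : LForm L → Prop
  | .lab l => l ∈ X
  | .top => True
  | .and a b => a.Sat X ∧ b.Sat X
  | .or a b => a.Sat X ∨ b.Sat X
  | .not a => ¬ a.Sat X

/-- An RGPC automaton: disjoint finite sets of node states and edge states, an initial
node state, symbolic transitions labelled by label expressions alternating between node
and edge states, and accepting edge states. -/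
structure RGPCA (S L : Type) [DecidableEq S] [DecidableEq L] where
  QN : Finset S
  QE : Finset S
  disj : Disjoint QN QE
  init : S
  init_mem : init ∈ QN
  Δ : Set (S × LForm L × S)
  Δ_ok : ∀ t ∈ Δ, (t.1 ∈ QN ∧ t.2.2 ∈ QE) ∨ (t.1 ∈ QE ∧ t.2.2 ∈ QN)
  F : Finset S
  F_sub : F ⊆ QE

namespace RGPCA

variable {S L : Type} [DecidableEq S] [DecidableEq L]

/-- `r` is a run of the automaton `A` on the word `w` of label sets: a sequence of
states of length `|w| + 1` starting at the initial state, in which each step uses a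
transition whose formula is satisfied by the corresponding label set. -/
def Run (A : RGPCA S L) (w : List (Finset L)) (r : List S) : Prop :=
  r.length = w.length + 1 ∧ r.head? = some A.init ∧
  ∀ i, i < w.length →
    ∃ φ : LForm L, (r.getD i A.init, φ, r.getD (i + 1) A.init) ∈ A.Δ ∧
      φ.Sat (w.getD i ∅)

/-- `A` accepts the word `w` if some run on `w` ends in an accepting state. -/
def Accepts (A : RGPCA S L) (w : List (Finset L)) : Prop :=
  ∃ r q, A.Run w r ∧ r.getLast? = some q ∧ q ∈ A.F

end RGPCA
/-!
A run of the concatenation automaton starts among the states of `A1` and ends at `a2`, among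
those of `A2`. Transitions of `A1` and of `A2` stay on their own side of the disjoint union, so
the run crosses over exactly once, along a merged transition `(q, φ ∧ ψ, q')`. The letter `X`
read there satisfies both `φ` and `ψ`, which cuts the run into a run of `A1` on `u ++ [X]`
ending with `(q, φ, a1)` and a run of `A2` on `X :: v` starting with `(i2, ψ, q')`. Conversely,
two such runs glue together along the merged transition.
-/
namespace RGPCA

variable {S L : Type} [DecidableEq S] [DecidableEq L]

def States (A : RGPCA S L) : Finset S := A.QN ∪ A.QE

def Step (A : RGPCA S L) (X : Finset L) (p q : S) : Prop :=
  ∃ φ : LForm L, (p, φ, q) ∈ A.Δ ∧ φ.Sat X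

def Reads (A : RGPCA S L) : List (Finset L) → S → S → Prop
  | [], p, q => p = q
  | X :: w, p, q => ∃ m, A.Step X p m ∧ A.Reads w m q

variable {A B : RGPCA S L}

theorem Step.mem_states {X : Finset L} {p q : S} (h : A.Step X p q) :
    p ∈ A.States ∧ q ∈ A.States := by
  obtain ⟨φ, hΔ, -⟩ := h
  rcases A.Δ_ok _ hΔ with ⟨hp, hq⟩ | ⟨hp, hq⟩ <;>
    simp [States, hp, hq]

theorem Step.mono (hAB : A.Δ ⊆ B.Δ) {X : Finset L} {p q : S} (h : A.Step X p q) :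
    B.Step X p q :=
  let ⟨φ, hΔ, hφ⟩ := h; ⟨φ, hAB hΔ, hφ⟩

theorem Reads.mono (hAB : A.Δ ⊆ B.Δ) {w : List (Finset L)} {p q : S} (h : A.Reads w p q) :
    B.Reads w p q := by
  induction w generalizing p with
  | nil => exact h
  | cons X w ih =>
    obtain ⟨m, hstep, hrest⟩ := h
    exact ⟨m, hstep.mono hAB, ih hrest⟩

theorem reads_singleton {X : Finset L} {p q : S} : A.Reads [X] p q ↔ A.Step X p q := by
  simp [Reads]

theorem reads_append {u v : List (Finset L)} {p q : S} :
    A.Reads (u ++ v) p q ↔ ∃ m, A.Reads u p m ∧ A.Reads v m q := by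
  induction u generalizing p with
  | nil => simp [Reads]
  | cons X u ih => simp only [List.cons_append, Reads, ih]; aesop

theorem reads_iff_exists_list (d : S) {w : List (Finset L)} {p q : S} :
    A.Reads w p q ↔ ∃ r : List S, r.length = w.length + 1 ∧ r.head? = some p ∧
      r.getLast? = some q ∧
        ∀ i < w.length, A.Step (w.getD i ∅) (r.getD i d) (r.getD (i + 1) d) := by
  induction w generalizing p with
  | nil =>
    simp only [Reads, List.length_nil, zero_add, List.length_eq_one_iff]
    constructor
    · rintro rfl; exact ⟨[p], ⟨p, rfl⟩, rfl, rfl, by simp⟩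
    · rintro ⟨_, ⟨a, rfl⟩, hp, hq, -⟩
      simp_all
  | cons X w ih =>
    simp only [Reads, ih]
    constructor
    · rintro ⟨m, hstep, r, hlen, hhead, hlast, hsteps⟩
      obtain ⟨r, rfl⟩ : ∃ r', r = m :: r' := by
        cases r with
        | nil => simp at hhead
        | cons a r' => simp_all
      refine ⟨p :: m :: r, by simp_all, rfl, by simpa using hlast, ?_⟩
      rintro (_ | i) hi
      · simpa using hstep
      · simpa using hsteps i (by simpa using hi)
    · rintro ⟨r, hlen, hhead, hlast, hsteps⟩
      obtain ⟨m, r, rfl⟩ : ∃ m r', r = p :: m :: r' := by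
        match r, hlen, hhead with
        | a :: b :: r', _, hhead => exact ⟨b, r', by simp_all⟩
      refine ⟨m, by simpa using hsteps 0 (by simp), m :: r, by simpa using hlen, rfl,
        by simpa using hlast, fun i hi => by simpa using hsteps (i + 1) (by simpa using hi)⟩

theorem accepts_iff_reads {w : List (Finset L)} :
    A.Accepts w ↔ ∃ q ∈ A.F, A.Reads w A.init q := by
  simp only [Accepts, Run, reads_iff_exists_list A.init, Step]
  aesop

section Concat

variable {A1 A2 A : RGPCA S L} {a1 : S}
  (hΔ : A.Δ = A1.Δ ∪ A2.Δ ∪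
    {t | ∃ q φ ψ q', (q, φ, a1) ∈ A1.Δ ∧ (A2.init, ψ, q') ∈ A2.Δ ∧
      t = (q, LForm.and φ ψ, q')})
include hΔ

theorem step_concat_iff {X : Finset L} {p q : S} :
    A.Step X p q ↔
      A1.Step X p q ∨ A2.Step X p q ∨ (A1.Step X p a1 ∧ A2.Step X A2.init q) := by
  simp only [Step, hΔ, Set.mem_union, Set.mem_ofPred_eq, Prod.mk.injEq]
  constructor
  · rintro ⟨φ, (h1 | h2) | ⟨_, φ1, ψ, _, h1, h2, rfl, rfl, rfl⟩, hφ⟩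
    exacts [Or.inl ⟨φ, h1, hφ⟩, Or.inr (Or.inl ⟨φ, h2, hφ⟩),
      Or.inr (Or.inr ⟨⟨φ1, h1, hφ.1⟩, ⟨ψ, h2, hφ.2⟩⟩)]
  · rintro (⟨φ, h1, hφ⟩ | ⟨φ, h2, hφ⟩ | ⟨⟨φ, h1, hφ⟩, ⟨ψ, h2, hψ⟩⟩)
    exacts [⟨φ, Or.inl (Or.inl h1), hφ⟩, ⟨φ, Or.inl (Or.inr h2), hφ⟩,
      ⟨_, Or.inr ⟨p, φ, ψ, q, h1, h2, rfl, rfl, rfl⟩, hφ, hψ⟩]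

theorem Reads.concat {u v : List (Finset L)} {X : Finset L} {p q : S}
    (h1 : A1.Reads (u ++ [X]) p a1) (h2 : A2.Reads (X :: v) A2.init q) :
    A.Reads (u ++ X :: v) p q := by
  obtain ⟨r, hu, hr⟩ := reads_append.1 h1
  obtain ⟨m, hm, hv⟩ := h2
  have hsub1 : A1.Δ ⊆ A.Δ := hΔ ▸ Set.subset_union_left.trans Set.subset_union_left
  have hsub2 : A2.Δ ⊆ A.Δ := hΔ ▸ Set.subset_union_right.trans Set.subset_union_left
  have hstep : A.Step X r m :=
    (step_concat_iff hΔ).2 (Or.inr (Or.inr ⟨reads_singleton.1 hr, hm⟩))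
  exact reads_append.2 ⟨r, hu.mono hsub1, m, hstep, hv.mono hsub2⟩

variable (hdisj : Disjoint A1.States A2.States)
include hdisj

theorem Reads.of_mem_states_right {w : List (Finset L)} {p q : S} (hp : p ∈ A2.States)
    (h : A.Reads w p q) : A2.Reads w p q := by
  induction w generalizing p with
  | nil => exact h
  | cons X w ih =>
    obtain ⟨m, hstep, hrest⟩ := h
    have hstep2 : A2.Step X p m := by
      rcases (step_concat_iff hΔ).1 hstep with h1 | h2 | ⟨h1, -⟩
      · exact absurd hp (Finset.disjoint_left.1 hdisj h1.mem_states.1)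
      · exact h2
      · exact absurd hp (Finset.disjoint_left.1 hdisj h1.mem_states.1)
    exact ⟨m, hstep2, ih hstep2.mem_states.2 hrest⟩

theorem Reads.exists_split {w : List (Finset L)} {p q : S} (hp : p ∈ A1.States)
    (hq : q ∈ A2.States) (h : A.Reads w p q) :
    ∃ u X v, w = u ++ X :: v ∧ A1.Reads (u ++ [X]) p a1 ∧ A2.Reads (X :: v) A2.init q := by
  induction w generalizing p with
  | nil => exact absurd hq (Finset.disjoint_left.1 hdisj (h ▸ hp))
  | cons X w ih =>
    obtain ⟨m, hstep, hrest⟩ := h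
    rcases (step_concat_iff hΔ).1 hstep with h1 | h2 | ⟨h1, h2⟩
    · obtain ⟨u, Y, v, rfl, hu, hv⟩ := ih h1.mem_states.2 hrest
      exact ⟨X :: u, Y, v, rfl, ⟨m, h1, hu⟩, hv⟩
    · exact absurd h2.mem_states.1 (Finset.disjoint_left.1 hdisj hp)
    · exact ⟨[], X, w, rfl, reads_singleton.2 h1,
        m, h2, hrest.of_mem_states_right hΔ hdisj h2.mem_states.2⟩

end Concat

end RGPCA

theorem concatAut_accepts_iff_general {S L : Type} [DecidableEq S] [DecidableEq L]
    (A1 A2 A : RGPCA S L) (a1 a2 : S)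
    (hdisj : Disjoint (A1.QN ∪ A1.QE) (A2.QN ∪ A2.QE))
    (hF1 : A1.F = {a1}) (hF2 : A2.F = {a2})
    (hinit : A.init = A1.init) (hF : A.F = {a2})
    (hΔ : A.Δ = A1.Δ ∪ A2.Δ ∪
      {t | ∃ q φ ψ q', (q, φ, a1) ∈ A1.Δ ∧ (A2.init, ψ, q') ∈ A2.Δ ∧
        t = (q, LForm.and φ ψ, q')}) :
    ∀ w : List (Finset L),
      A.Accepts w ↔
        ∃ (u : List (Finset L)) (X : Finset L) (v : List (Finset L)),
          w = u ++ X :: v ∧ A1.Accepts (u ++ [X]) ∧ A2.Accepts (X :: v) := by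
  intro w
  simp only [RGPCA.accepts_iff_reads, hF, hF1, hF2, hinit, Finset.mem_singleton, exists_eq_left]
  have hinit1 : A1.init ∈ A1.States := Finset.mem_union_left _ A1.init_mem
  have ha2 : a2 ∈ A2.States := Finset.mem_union_right _ (A2.F_sub (by simp [hF2]))
  constructor
  · exact RGPCA.Reads.exists_split hΔ hdisj hinit1 ha2
  · rintro ⟨u, X, v, rfl, h1, h2⟩
    exact RGPCA.Reads.concat hΔ h1 h2

/-- Correctness of the concatenation construction for RGPC automata: let `A1` and `A2`
have disjoint state sets, unique accepting states `a1`, `a2` distinct from their initial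
states, initial states with only outgoing and accepting states with only incoming
transitions. If `A` is the concatenation automaton — same states, initial state of `A1`,
accepting state `a2`, and transitions those of `A1` and `A2` together with the merged
transitions `(q, φ ∧ ψ, q')` for `(q, φ, a1) ∈ Δ1` and `(i2, ψ, q') ∈ Δ2` — then `A`
accepts `w` iff `w = u ++ [X] ++ v` where `A1` accepts `u ++ [X]` and `A2` accepts
`X :: v`. -/
theorem concatAut_accepts_iff {S L : Type} [DecidableEq S] [DecidableEq L]
    (A1 A2 A : RGPCA S L) (a1 a2 : S)
    (hdisj : Disjoint (A1.QN ∪ A1.QE) (A2.QN ∪ A2.QE))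
    (hF1 : A1.F = {a1}) (hF2 : A2.F = {a2})
    (ha1 : a1 ≠ A1.init) (ha2 : a2 ≠ A2.init)
    (hout1 : ∀ t ∈ A1.Δ, t.2.2 ≠ A1.init) (hout2 : ∀ t ∈ A2.Δ, t.2.2 ≠ A2.init)
    (hin1 : ∀ t ∈ A1.Δ, t.1 ≠ a1) (hin2 : ∀ t ∈ A2.Δ, t.1 ≠ a2)
    (hQN : A.QN = A1.QN ∪ A2.QN) (hQE : A.QE = A1.QE ∪ A2.QE)
    (hinit : A.init = A1.init) (hF : A.F = {a2})
    (hΔ : A.Δ = A1.Δ ∪ A2.Δ ∪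
      {t | ∃ q φ ψ q', (q, φ, a1) ∈ A1.Δ ∧ (A2.init, ψ, q') ∈ A2.Δ ∧
        t = (q, LForm.and φ ψ, q')}) :
    ∀ w : List (Finset L),
      A.Accepts w ↔
        ∃ (u : List (Finset L)) (X : Finset L) (v : List (Finset L)),
          w = u ++ X :: v ∧ A1.Accepts (u ++ [X]) ∧ A2.Accepts (X :: v) :=
  concatAut_accepts_iff_general A1 A2 A a1 a2 hdisj hF1 hF2 hinit hF hΔ
end

section
/- Let G be a property graph, Σ a set of RGPC constraints, H the topological conflict hypergraph of G with respect to Σ, and V a minimum weight vertex cover of H, where the weight of a node is one plus the number of its incident edges and the weight of an edge is 1. Then the topological subgraph G' obtained from G by removing all objects in V (together with all edges incident to removed nodes) is a topological repair of G: G' satisfies Σ and no topological subgraph G'' of G satisfying Σ has G' as a proper subgraph. -/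
open scoped Classical

/-- A property graph: finite disjoint sets of node and edge identifiers, endpoints for
edges, finite label sets for nodes and edges, and a partial property assignment. -/
structure PGraph (I L K Val : Type) where
  N : Finset I
  E : Finset I
  disj : Disjoint N E
  ρ : I → Option (I × I)
  ρ_dom : ∀ e, (ρ e).isSome ↔ e ∈ E
  ρ_mem : ∀ e p, ρ e = some p → p.1 ∈ N ∧ p.2 ∈ N
  lab : I → Finset L
  lab_dom : ∀ o, o ∉ N → o ∉ E → lab o = ∅
  π : I → K → Option Val
  π_dom : ∀ o k, (π o k).isSome → o ∈ N ∨ o ∈ E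

/-- `G'` is a subgraph of `G`. -/
def Subgraph {I L K Val : Type} (G' G : PGraph I L K Val) : Prop :=
  G'.N ⊆ G.N ∧ G'.E ⊆ G.E ∧
  (∀ e ∈ G'.E, G'.ρ e = G.ρ e) ∧
  (∀ o, G'.lab o ⊆ G.lab o) ∧
  (∀ o k v, G'.π o k = some v → G.π o k = some v)

/-- `G'` is a topological subgraph of `G`: a subgraph in which every retained node and
edge keeps exactly the same labels and properties as in `G`. -/
def TopSubgraph {I L K Val : Type} (G' G : PGraph I L K Val) : Prop :=
  Subgraph G' G ∧
  ∀ o, (o ∈ G'.N ∨ o ∈ G'.E) → G'.lab o = G.lab o ∧ ∀ k, G'.π o k = G.π o k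

/-- The degree of a node: the number of edges of `G` incident to it. -/
noncomputable def PGraph.deg {I L K Val : Type} (G : PGraph I L K Val) (n : I) : ℕ :=
  (G.E.filter fun e => ∃ u v, G.ρ e = some (u, v) ∧ (u = n ∨ v = n)).card

/-- `G'` is the topological subgraph of `G` obtained by removing the objects in `V`
(together with all edges incident to removed nodes). -/
def RemovalOf {I L K Val : Type} [DecidableEq I]
    (G : PGraph I L K Val) (V : Finset I) (G' : PGraph I L K Val) : Prop :=
  TopSubgraph G' G ∧ G'.N = G.N \ V ∧
  ∀ e, e ∈ G'.E ↔ e ∈ G.E ∧ e ∉ V ∧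
    ∀ u v, G.ρ e = some (u, v) → u ∉ V ∧ v ∉ V

/-- An object set `O` is fully present in a property graph `H`. -/
def PresentIn {I L K Val : Type} (O : Finset I) (H : PGraph I L K Val) : Prop :=
  ∀ o ∈ O, o ∈ H.N ∨ o ∈ H.E

theorem PGraph.ext' {I L K Val : Type} {A B : PGraph I L K Val}
    (hN : A.N = B.N) (hE : A.E = B.E) (hρ : A.ρ = B.ρ) (hlab : A.lab = B.lab)
    (hπ : A.π = B.π) : A = B := by
  cases A; cases B; simp_all

theorem sum_split_helper {I L K Val : Type} [DecidableEq I]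
    (G : PGraph I L K Val) (w : I → ℕ)
    (hwE : ∀ e ∈ G.E, w e = 1) (hwN : ∀ n ∈ G.N, w n = G.deg n + 1)
    (S : Finset I) (hS : ∀ v ∈ S, v ∈ G.N ∨ v ∈ G.E) :
    ∑ v ∈ S, w v = ∑ v ∈ S ∩ G.N, (G.deg v + 1) + (S ∩ G.E).card := by
  have hdisj : Disjoint (S ∩ G.N) (S ∩ G.E) :=
    Disjoint.mono Finset.inter_subset_right Finset.inter_subset_right G.disj
  have hU : S = (S ∩ G.N) ∪ (S ∩ G.E) := by
    ext x
    simp only [Finset.mem_union, Finset.mem_inter]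
    constructor
    · intro hx; rcases hS x hx with h | h
      · exact Or.inl ⟨hx, h⟩
      · exact Or.inr ⟨hx, h⟩
    · rintro (⟨h, _⟩ | ⟨h, _⟩) <;> exact h
  conv_lhs => rw [hU]
  rw [Finset.sum_union hdisj]
  congr 1
  · exact Finset.sum_congr rfl fun v hv => hwN v (Finset.mem_inter.mp hv).2
  · rw [Finset.card_eq_sum_ones]
    exact Finset.sum_congr rfl fun v hv => hwE v (Finset.mem_inter.mp hv).2

theorem inc_bound_helper {I L K Val : Type} [DecidableEq I]
    (G : PGraph I L K Val) (D B : Finset I) (hBE : B ⊆ G.E)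
    (hBinc : ∀ e ∈ B, ∃ u v, G.ρ e = some (u, v) ∧ (u ∈ D ∨ v ∈ D)) :
    B.card ≤ ∑ n ∈ D, G.deg n := by
  have hsub : B ⊆ D.biUnion (fun n =>
      G.E.filter fun e => ∃ u v, G.ρ e = some (u, v) ∧ (u = n ∨ v = n)) := by
    intro e he
    obtain ⟨u, v, hρ, huv⟩ := hBinc e he
    rcases huv with h | h
    · exact Finset.mem_biUnion.mpr ⟨u, h, Finset.mem_filter.mpr ⟨hBE he, u, v, hρ, Or.inl rfl⟩⟩
    · exact Finset.mem_biUnion.mpr ⟨v, h, Finset.mem_filter.mpr ⟨hBE he, u, v, hρ, Or.inr rfl⟩⟩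
  calc B.card ≤ _ := Finset.card_le_card hsub
    _ ≤ ∑ n ∈ D, _ := Finset.card_biUnion_le
    _ = ∑ n ∈ D, G.deg n := Finset.sum_congr rfl fun n _ => rfl
/-- Removing a minimum weight vertex cover of the topological conflict hypergraph — with
node weights degree-plus-one and edge weights `1` — yields a topological repair: the
resulting topological subgraph satisfies the constraints, and no topological subgraph of
`G` satisfying the constraints properly extends it. Here `Err` is the set of topological
errors (hyperedges), each consisting of objects of `G` and containing the endpoints of
every edge it contains, and satisfaction of the constraints `Σ` by a topological
subgraph `H` is characterized by no error being fully present in `H`. -/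
theorem min_weight_cover_removal_is_topological_repair
    {I L K Val : Type} [DecidableEq I]
    (G G' : PGraph I L K Val)
    (Err : Finset (Finset I))
    (hErrObj : ∀ O ∈ Err, ∀ o ∈ O, o ∈ G.N ∨ o ∈ G.E)
    (hErrEndp : ∀ O ∈ Err, ∀ e ∈ O, ∀ u v, G.ρ e = some (u, v) → u ∈ O ∧ v ∈ O)
    (Sat : PGraph I L K Val → Prop)
    (hSat : ∀ H, TopSubgraph H G → (Sat H ↔ ∀ O ∈ Err, ¬ PresentIn O H))
    (w : I → ℕ)
    (hwE : ∀ e ∈ G.E, w e = 1)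
    (hwN : ∀ n ∈ G.N, w n = G.deg n + 1)
    (V : Finset I)
    (hVobj : ∀ v ∈ V, v ∈ G.N ∨ v ∈ G.E)
    (hcover : ∀ O ∈ Err, (V ∩ O).Nonempty)
    (hmin : ∀ V' : Finset I, (∀ v ∈ V', v ∈ G.N ∨ v ∈ G.E) →
      (∀ O ∈ Err, (V' ∩ O).Nonempty) → ∑ v ∈ V, w v ≤ ∑ v ∈ V', w v)
    (hG' : RemovalOf G V G') :
    Sat G' ∧
    ∀ G'' : PGraph I L K Val, TopSubgraph G'' G → Sat G'' →
      TopSubgraph G' G'' → G' = G'' := by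
  obtain ⟨hTS', hN', hE'⟩ := hG'
  -- Part 1: G' satisfies Σ
  have hSatG' : Sat G' := by
    rw [hSat G' hTS']
    intro O hO hpres
    obtain ⟨v, hv⟩ := hcover O hO
    rw [Finset.mem_inter] at hv
    rcases hpres v hv.2 with h | h
    · rw [hN'] at h; exact (Finset.mem_sdiff.mp h).2 hv.1
    · exact ((hE' v).mp h).2.1 hv.1
  refine ⟨hSatG', ?_⟩
  intro G'' hTS'' hSatG'' hle
  obtain ⟨⟨hNsub'', hEsub'', hρ'', hlabs'', hπs''⟩, htop''⟩ := hTS''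
  obtain ⟨⟨hNle, hEle, hρle, _, _⟩, _⟩ := hle
  obtain ⟨⟨hNsub', hEsub', hρ', _, _⟩, htop'⟩ := hTS'
  -- the removed sets for G''
  set WN : Finset I := G.N \ G''.N with hWN
  set WE : Finset I := G.E \ G''.E with hWE
  set WE' : Finset I := WE.filter
    (fun e => ∀ u v, G.ρ e = some (u, v) → u ∈ G''.N ∧ v ∈ G''.N) with hWE'
  set V'' : Finset I := WN ∪ WE' with hV''
  have hWNN : WN ⊆ G.N := Finset.sdiff_subset
  have hWE'E : WE' ⊆ G.E := (Finset.filter_subset _ _).trans Finset.sdiff_subset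
  have hVobj'' : ∀ v ∈ V'', v ∈ G.N ∨ v ∈ G.E := by
    intro v hv
    rcases Finset.mem_union.mp hv with h | h
    · exact Or.inl (hWNN h)
    · exact Or.inr (hWE'E h)
  -- V'' is a cover
  have hcover'' : ∀ O ∈ Err, (V'' ∩ O).Nonempty := by
    intro O hO
    have hnp : ¬ PresentIn O G'' := (hSat G'' ⟨⟨hNsub'', hEsub'', hρ'', hlabs'', hπs''⟩, htop''⟩).mp hSatG'' O hO
    rw [PresentIn] at hnp
    push_neg at hnp
    obtain ⟨o, hoO, honN, honE⟩ := hnp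
    rcases hErrObj O hO o hoO with h | h
    · exact ⟨o, Finset.mem_inter.mpr ⟨Finset.mem_union.mpr (Or.inl (Finset.mem_sdiff.mpr ⟨h, honN⟩)), hoO⟩⟩
    · -- o is an edge of G not in G''
      have hoWE : o ∈ WE := Finset.mem_sdiff.mpr ⟨h, honE⟩
      by_cases hep : ∀ u v, G.ρ o = some (u, v) → u ∈ G''.N ∧ v ∈ G''.N
      · exact ⟨o, Finset.mem_inter.mpr ⟨Finset.mem_union.mpr (Or.inr
          (Finset.mem_filter.mpr ⟨hoWE, hep⟩)), hoO⟩⟩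
      · push_neg at hep
        obtain ⟨u, v, hρo, hbad⟩ := hep
        have hends := hErrEndp O hO o hoO u v hρo
        have hmem := G.ρ_mem o (u, v) hρo
        have hbad' : u ∉ G''.N ∨ v ∉ G''.N := by
          by_cases h : u ∈ G''.N
          exacts [Or.inr (hbad h), Or.inl h]
        rcases hbad' with hb | hb
        · refine ⟨u, Finset.mem_inter.mpr ⟨Finset.mem_union.mpr (Or.inl
            (Finset.mem_sdiff.mpr ⟨hmem.1, hb⟩)), hends.1⟩⟩
        · refine ⟨v, Finset.mem_inter.mpr ⟨Finset.mem_union.mpr (Or.inl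
            (Finset.mem_sdiff.mpr ⟨hmem.2, hb⟩)), hends.2⟩⟩
  have hminle : ∑ v ∈ V, w v ≤ ∑ v ∈ V'', w v := hmin V'' hVobj'' hcover''
  -- weight computations
  have hsumV : ∑ v ∈ V, w v = ∑ v ∈ V ∩ G.N, (G.deg v + 1) + (V ∩ G.E).card :=
    sum_split_helper G w hwE hwN V hVobj
  have hsumV'' : ∑ v ∈ V'', w v = ∑ v ∈ V'' ∩ G.N, (G.deg v + 1) + (V'' ∩ G.E).card :=
    sum_split_helper G w hwE hwN V'' hVobj''
  have hVN'' : V'' ∩ G.N = WN := by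
    rw [hV'', Finset.union_inter_distrib_right]
    rw [Finset.inter_eq_left.mpr hWNN]
    rw [Finset.union_eq_left]
    intro x hx
    exact absurd (Finset.mem_inter.mp hx)
      (fun h => Finset.disjoint_left.mp G.disj h.2 (hWE'E h.1))
  have hVE'' : V'' ∩ G.E = WE' := by
    rw [hV'', Finset.union_inter_distrib_right]
    rw [Finset.inter_eq_left.mpr hWE'E]
    rw [Finset.union_eq_right]
    intro x hx
    exact absurd (Finset.mem_inter.mp hx)
      (fun h => Finset.disjoint_left.mp G.disj (hWNN h.1) h.2)
  rw [hVN'', hVE''] at hsumV''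
  -- WN ⊆ V ∩ G.N
  have hWNsub : WN ⊆ V ∩ G.N := by
    intro n hn
    obtain ⟨hnN, hnn⟩ := Finset.mem_sdiff.mp hn
    refine Finset.mem_inter.mpr ⟨?_, hnN⟩
    by_contra hnV
    exact hnn (hNle (hN' ▸ Finset.mem_sdiff.mpr ⟨hnN, hnV⟩))
  -- D : nodes of V not removed from G''
  set D : Finset I := (V ∩ G.N) \ WN with hD
  set A : Finset I := WE' ∩ V with hA
  set B : Finset I := WE' \ V with hB
  have hAB : A.card + B.card = WE'.card := Finset.card_inter_add_card_sdiff WE' V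
  have hAsub : A ⊆ V ∩ G.E := by
    intro e he
    obtain ⟨h1, h2⟩ := Finset.mem_inter.mp he
    exact Finset.mem_inter.mpr ⟨h2, hWE'E h1⟩
  have hAle : A.card ≤ (V ∩ G.E).card := Finset.card_le_card hAsub
  -- each edge in B is incident to a node of D
  have hBinc : ∀ e ∈ B, ∃ u v, G.ρ e = some (u, v) ∧ (u ∈ D ∨ v ∈ D) := by
    intro e he
    obtain ⟨heWE', heV⟩ := Finset.mem_sdiff.mp he
    obtain ⟨heWE, hep⟩ := Finset.mem_filter.mp heWE'
    obtain ⟨heE, henE''⟩ := Finset.mem_sdiff.mp heWE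
    have henE' : e ∉ G'.E := fun h => henE'' (hEle h)
    have : ¬ (e ∈ G.E ∧ e ∉ V ∧ ∀ u v, G.ρ e = some (u, v) → u ∉ V ∧ v ∉ V) :=
      fun h => henE' ((hE' e).mpr h)
    push_neg at this
    obtain ⟨u, v, hρe, hb⟩ := this heE heV
    have hmem := G.ρ_mem e (u, v) hρe
    have hep' := hep u v hρe
    refine ⟨u, v, hρe, ?_⟩
    have hb' : u ∈ V ∨ v ∈ V := by
      by_cases h : u ∈ V
      exacts [Or.inl h, Or.inr (hb h)]
    rcases hb' with hb | hb
    · exact Or.inl (Finset.mem_sdiff.mpr ⟨Finset.mem_inter.mpr ⟨hb, hmem.1⟩,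
        fun hc => (Finset.mem_sdiff.mp hc).2 hep'.1⟩)
    · exact Or.inr (Finset.mem_sdiff.mpr ⟨Finset.mem_inter.mpr ⟨hb, hmem.2⟩,
        fun hc => (Finset.mem_sdiff.mp hc).2 hep'.2⟩)
  have hBle : B.card ≤ ∑ n ∈ D, G.deg n :=
    inc_bound_helper G D B ((Finset.sdiff_subset).trans hWE'E) hBinc
  -- sum over V ∩ G.N splits over WN and D
  have hsplitN : ∑ v ∈ D, (G.deg v + 1) + ∑ v ∈ WN, (G.deg v + 1)
      = ∑ v ∈ V ∩ G.N, (G.deg v + 1) := Finset.sum_sdiff hWNsub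
  have hDsum : ∑ v ∈ D, (G.deg v + 1) = ∑ v ∈ D, G.deg v + D.card := by
    rw [Finset.sum_add_distrib, Finset.sum_const, smul_eq_mul, mul_one]
  -- conclude D = ∅ and equalities
  have hkey : D.card = 0 ∧ A.card = (V ∩ G.E).card ∧ B.card = ∑ n ∈ D, G.deg n := by
    omega
  have hDempty : D = ∅ := Finset.card_eq_zero.mp hkey.1
  have hWNeq : WN = V ∩ G.N := by
    apply Finset.Subset.antisymm hWNsub
    intro x hx
    by_contra hxn
    exact absurd (hDempty ▸ Finset.mem_sdiff.mpr ⟨hx, hxn⟩) (Finset.notMem_empty x)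
  have hBempty : B = ∅ := by
    rw [← Finset.card_eq_zero]
    have : ∑ n ∈ D, G.deg n = 0 := by rw [hDempty]; simp
    omega
  have hWE'eq : WE' = V ∩ G.E := by
    apply Finset.eq_of_subset_of_card_le
    · intro e he
      have : e ∈ A ∨ e ∈ B := by
        by_cases h : e ∈ V
        · exact Or.inl (Finset.mem_inter.mpr ⟨he, h⟩)
        · exact Or.inr (Finset.mem_sdiff.mpr ⟨he, h⟩)
      rcases this with h | h
      · exact hAsub h
      · exact absurd (hBempty ▸ h) (Finset.notMem_empty e)
    · have hBc : B.card = 0 := by rw [hBempty]; simp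
      omega
  -- Now show the graphs are equal
  have hNeq : G'.N = G''.N := by
    have h1 : G''.N = G.N \ WN := by
      rw [hWN]
      exact (Finset.sdiff_sdiff_eq_self hNsub'').symm
    rw [hN', h1, hWNeq]
    ext x
    simp only [Finset.mem_sdiff, Finset.mem_inter]
    tauto
  have hEeq : G'.E = G''.E := by
    apply Finset.Subset.antisymm hEle
    intro e he
    have heE : e ∈ G.E := hEsub'' he
    rw [hE' e]
    refine ⟨heE, ?_, ?_⟩
    · intro heV
      have : e ∈ WE' := hWE'eq ▸ Finset.mem_inter.mpr ⟨heV, heE⟩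
      exact (Finset.mem_sdiff.mp (Finset.mem_filter.mp this).1).2 he
    · intro u v hρe
      have hρ''e : G''.ρ e = some (u, v) := by rw [hρ'' e he]; exact hρe
      have hmem'' := G''.ρ_mem e (u, v) hρ''e
      have hmem := G.ρ_mem e (u, v) hρe
      constructor
      · intro huV
        have : u ∈ WN := hWNeq ▸ Finset.mem_inter.mpr ⟨huV, hmem.1⟩
        exact (Finset.mem_sdiff.mp this).2 hmem''.1
      · intro hvV
        have : v ∈ WN := hWNeq ▸ Finset.mem_inter.mpr ⟨hvV, hmem.2⟩
        exact (Finset.mem_sdiff.mp this).2 hmem''.2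
  -- extensionality
  apply PGraph.ext' hNeq hEeq
  · funext e
    by_cases he : e ∈ G'.E
    · rw [hρ' e he, ← hρ'' e (hEeq ▸ he)]
    · have h1 : G'.ρ e = none := by
        rw [← Option.not_isSome_iff_eq_none, G'.ρ_dom]; exact he
      have h2 : G''.ρ e = none := by
        rw [← Option.not_isSome_iff_eq_none, G''.ρ_dom]; exact hEeq ▸ he
      rw [h1, h2]
  · funext o
    by_cases ho : o ∈ G'.N ∨ o ∈ G'.E
    · rw [(htop' o ho).1, ((htop'' o (by rw [← hNeq, ← hEeq]; exact ho)).1)]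
    · push_neg at ho
      rw [G'.lab_dom o ho.1 ho.2, G''.lab_dom o (hNeq ▸ ho.1) (hEeq ▸ ho.2)]
  · funext o k
    by_cases ho : o ∈ G'.N ∨ o ∈ G'.E
    · rw [(htop' o ho).2 k, ((htop'' o (by rw [← hNeq, ← hEeq]; exact ho)).2 k)]
    · push_neg at ho
      have h1 : G'.π o k = none := by
        by_contra h
        rcases G'.π_dom o k (Option.ne_none_iff_isSome.mp h) with hh | hh
        · exact ho.1 hh
        · exact ho.2 hh
      have h2 : G''.π o k = none := by
        by_contra h
        rcases G''.π_dom o k (Option.ne_none_iff_isSome.mp h) with hh | hh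
        · exact ho.1 (hNeq ▸ hh)
        · exact ho.2 (hEeq ▸ hh)
      rw [h1, h2]
end

section
/- Let H be the topological conflict hypergraph of a property graph G with respect to RGPC constraints Σ, with node weights equal to degree plus one and edge weights equal to 1. If V is a vertex cover of H that is (i) minimal, and (ii) for every v ∈ V there is a hyperedge O with V ∩ O = {v} such that v has minimal weight among all objects in O, then removing all objects of V from G (together with edges incident to removed nodes) yields a topological repair of G. In particular, the output of the naive greedy algorithm (which always selects minimal-weight objects from hyperedges and then trims, in descending order of weight, any selected vertex that is not the unique selected vertex of some hyperedge) is a topological repair. -/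
open scoped Classical

/-- Removing a vertex cover `V` of the topological conflict hypergraph that is
(i) minimal and (ii) such that every `v ∈ V` is the unique selected vertex of some
hyperedge on which it has minimal weight, yields a topological repair. This covers, in
particular, the output of the naive greedy algorithm. Node weights are degree-plus-one
and edge weights are `1`; `Err` is the set of topological errors, each consisting of
objects of `G` and containing the endpoints of every edge it contains; satisfaction of
the constraints by a topological subgraph `H` is characterized by no error being fully
present in `H`. -/
theorem greedy_cover_removal_is_topological_repair
    {I L K Val : Type} [DecidableEq I]
    (G G' : PGraph I L K Val)
    (Err : Finset (Finset I))
    (hErrObj : ∀ O ∈ Err, ∀ o ∈ O, o ∈ G.N ∨ o ∈ G.E)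
    (hErrEndp : ∀ O ∈ Err, ∀ e ∈ O, ∀ u v, G.ρ e = some (u, v) → u ∈ O ∧ v ∈ O)
    (Sat : PGraph I L K Val → Prop)
    (hSat : ∀ H, TopSubgraph H G → (Sat H ↔ ∀ O ∈ Err, ¬ PresentIn O H))
    (w : I → ℕ)
    (hwE : ∀ e ∈ G.E, w e = 1)
    (hwN : ∀ n ∈ G.N, w n = G.deg n + 1)
    (V : Finset I)
    (hVobj : ∀ v ∈ V, v ∈ G.N ∨ v ∈ G.E)
    (hcover : ∀ O ∈ Err, (V ∩ O).Nonempty)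
    (hminimal : ∀ V' ⊂ V, ¬ ∀ O ∈ Err, (V' ∩ O).Nonempty)
    (hgreedy : ∀ v ∈ V, ∃ O ∈ Err, V ∩ O = {v} ∧ ∀ o ∈ O, w v ≤ w o)
    (hG' : RemovalOf G V G') :
    Sat G' ∧
    ∀ G'' : PGraph I L K Val, TopSubgraph G'' G → Sat G'' →
      TopSubgraph G' G'' → G' = G'' := by
  obtain ⟨hT', hN', hE'⟩ := hG'
  constructor
  · rw [hSat G' hT']
    intro O hO hpres
    obtain ⟨v, hv⟩ := hcover O hO
    have hvV : v ∈ V := (Finset.mem_inter.mp hv).1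
    have hvO : v ∈ O := (Finset.mem_inter.mp hv).2
    rcases hpres v hvO with h | h
    · rw [hN'] at h; exact (Finset.mem_sdiff.mp h).2 hvV
    · exact ((hE' v).mp h).2.1 hvV
  · intro G'' hT'' hS'' hsub
    -- key: no element of V is present in G''
    have key : ∀ v ∈ V, ¬ (v ∈ G''.N ∨ v ∈ G''.E) := by
      intro v hvV hvpres
      obtain ⟨O, hO, hVO, hwmin⟩ := hgreedy v hvV
      have hvO : v ∈ O := by
        have : v ∈ V ∩ O := by rw [hVO]; exact Finset.mem_singleton_self v
        exact (Finset.mem_inter.mp this).2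
      have huniq : ∀ o ∈ O, o ∈ V → o = v := by
        intro o ho hoV
        have : o ∈ V ∩ O := Finset.mem_inter.mpr ⟨hoV, ho⟩
        rw [hVO] at this; exact Finset.mem_singleton.mp this
      -- if some endpoint of an edge of O is in V, contradiction
      have hendp : ∀ o ∈ O, o ∈ G.E → ∀ u u', G.ρ o = some (u, u') →
          (u = v ∨ u' = v) → v ∈ G.N → False := by
        intro o ho hoE u u' hρ hend hvN
        have hdeg : G.deg v = 0 := by
          have h1 := hwmin o ho
          rw [hwN v hvN, hwE o hoE] at h1
          omega
        have : o ∈ G.E.filter fun e => ∃ a b, G.ρ e = some (a, b) ∧ (a = v ∨ b = v) :=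
          Finset.mem_filter.mpr ⟨hoE, u, u', hρ, hend⟩
        have := Finset.card_pos.mpr ⟨o, this⟩
        rw [← PGraph.deg] at this
        omega
      have hpres : PresentIn O G'' := by
        intro o ho
        rcases hErrObj O hO o ho with hoN | hoE
        · -- o is a node
          by_cases hov : o = v
          · subst hov
            rcases hvpres with h | h
            · exact Or.inl h
            · exact absurd hoN (Finset.disjoint_right.mp G.disj (hT''.1.2.1 h))
          · have hoV : o ∉ V := fun h => hov (huniq o ho h)
            have : o ∈ G'.N := by rw [hN']; exact Finset.mem_sdiff.mpr ⟨hoN, hoV⟩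
            exact Or.inl (hsub.1.1 this)
        · -- o is an edge
          by_cases hov : o = v
          · subst hov
            rcases hvpres with h | h
            · exact absurd hoE (Finset.disjoint_left.mp G.disj (hT''.1.1 h))
            · exact Or.inr h
          · have hoV : o ∉ V := fun h => hov (huniq o ho h)
            obtain ⟨⟨u, u'⟩, hρ⟩ := Option.isSome_iff_exists.mp ((G.ρ_dom o).mpr hoE)
            obtain ⟨huO, hu'O⟩ := hErrEndp O hO o ho u u' hρ
            obtain ⟨huN, hu'N⟩ := G.ρ_mem o (u, u') hρ
            have huV : u ∉ V := by
              intro h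
              exact hendp o ho hoE u u' hρ (Or.inl (huniq u huO h)) ((huniq u huO h) ▸ huN)
            have hu'V : u' ∉ V := by
              intro h
              exact hendp o ho hoE u u' hρ (Or.inr (huniq u' hu'O h)) ((huniq u' hu'O h) ▸ hu'N)
            have : o ∈ G'.E := (hE' o).mpr ⟨hoE, hoV, by
              intro a b hab
              rw [hρ] at hab
              obtain ⟨rfl, rfl⟩ := Prod.mk.injEq .. ▸ (Option.some_injective _ hab)
              exact ⟨huV, hu'V⟩⟩
            exact Or.inr (hsub.1.2.1 this)
      exact ((hSat G'' hT'').mp hS'') O hO hpres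
    have hNeq : G'.N = G''.N := by
      apply Finset.Subset.antisymm hsub.1.1
      intro n hn
      have hnG : n ∈ G.N := hT''.1.1 hn
      have hnV : n ∉ V := fun h => key n h (Or.inl hn)
      rw [hN']; exact Finset.mem_sdiff.mpr ⟨hnG, hnV⟩
    have hEeq : G'.E = G''.E := by
      apply Finset.Subset.antisymm hsub.1.2.1
      intro e he
      have heG : e ∈ G.E := hT''.1.2.1 he
      have heV : e ∉ V := fun h => key e h (Or.inr he)
      refine (hE' e).mpr ⟨heG, heV, ?_⟩
      intro u u' hρ
      have hρ'' : G''.ρ e = some (u, u') := by rw [hT''.1.2.2.1 e he]; exact hρ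
      obtain ⟨huN, hu'N⟩ := G''.ρ_mem e (u, u') hρ''
      exact ⟨fun h => key u h (Or.inl huN), fun h => key u' h (Or.inl hu'N)⟩
    -- now prove structural equality
    have hρeq : G'.ρ = G''.ρ := by
      funext e
      by_cases he : e ∈ G'.E
      · rw [hT'.1.2.2.1 e he, hT''.1.2.2.1 e (hEeq ▸ he)]
      · have h1 : G'.ρ e = none := Option.not_isSome_iff_eq_none.mp
          fun h => he ((G'.ρ_dom e).mp h)
        have h2 : G''.ρ e = none := Option.not_isSome_iff_eq_none.mp
          fun h => he (hEeq ▸ (G''.ρ_dom e).mp h)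
        rw [h1, h2]
    have hlabeq : G'.lab = G''.lab := by
      funext o
      by_cases ho : o ∈ G'.N ∨ o ∈ G'.E
      · rw [(hT'.2 o ho).1, (hT''.2 o (by rw [← hNeq, ← hEeq]; exact ho)).1]
      · push_neg at ho
        rw [G'.lab_dom o ho.1 ho.2, G''.lab_dom o (hNeq ▸ ho.1) (hEeq ▸ ho.2)]
    have hπeq : G'.π = G''.π := by
      funext o k
      by_cases ho : o ∈ G'.N ∨ o ∈ G'.E
      · rw [(hT'.2 o ho).2 k, (hT''.2 o (by rw [← hNeq, ← hEeq]; exact ho)).2 k]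
      · have h1 : G'.π o k = none := Option.not_isSome_iff_eq_none.mp
          fun h => ho (G'.π_dom o k h)
        have h2 : G''.π o k = none := Option.not_isSome_iff_eq_none.mp
          fun h => ho (by rw [hNeq, hEeq]; exact G''.π_dom o k h)
        rw [h1, h2]
    cases G'; cases G''
    simp_all
end
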